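/- For d ≥ 3 and any η with −1/(d+1) ≤ η ≤ 1/(d−1), one has η² ≤ 1/(d+1). Consequently, since V_{η}² = Δ_{η²} and Δ_μ is entanglement-breaking for μ ≤ 1/(d+1), the square of any Werner channel V_η in dimension d ≥ 3 is entanglement-breaking. -/

import Mathlib

open Matrix

/-- The depolarizing map `Δ_μ(X) = μ X + (1-μ)(Tr X) 𝟙 / d`. -/
noncomputable def depol (d : ℕ) (mu : ℝ) (X : Matrix (Fin d) (Fin d) ℂ) :
    Matrix (Fin d) (Fin d) ℂ :=
  (mu : ℂ) • X + (((1 - mu : ℝ) : ℂ) / d) • X.trace • (1 : Matrix (Fin d) (Fin d) ℂ)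

/-- The Werner–Holevo map `V_η(X) = -η Xᵀ + (1+η)(Tr X) 𝟙 / d`. -/
noncomputable def werner (d : ℕ) (eta : ℝ) (X : Matrix (Fin d) (Fin d) ℂ) :
    Matrix (Fin d) (Fin d) ℂ :=
  (-(eta : ℂ)) • Xᵀ + (((1 + eta : ℝ) : ℂ) / d) • X.trace • (1 : Matrix (Fin d) (Fin d) ℂ)

/-! `V_η` preserves the trace, and transposing `V_η(X)` gives back `X` up to a multiple of
`(Tr X) 𝟙`; hence `V_{η₁} V_{η₂} = Δ_{η₁ η₂}`. For `d ≥ 3` the admissible range of `η` lies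
inside `[-1/(d-1), 1/(d-1)]`, so `η² ≤ 1/(d-1)² ≤ 1/(d+1)`, the last step being
`(d-1)² - (d+1) = d (d-3) ≥ 0`. -/

theorem inv_sub_one_sq_le_inv_add_one {d : ℝ} (hd : 3 ≤ d) :
    (1 / (d - 1)) ^ 2 ≤ 1 / (d + 1) := by
  rw [div_pow, one_pow, div_le_div_iff₀ (by nlinarith) (by linarith)]
  nlinarith

theorem sq_le_inv_add_one_of_mem_Icc {d eta : ℝ} (hd : 3 ≤ d)
    (h₁ : -(1 / (d + 1)) ≤ eta) (h₂ : eta ≤ 1 / (d - 1)) :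
    eta ^ 2 ≤ 1 / (d + 1) := by
  have h_inv_le : 1 / (d + 1) ≤ 1 / (d - 1) :=
    one_div_le_one_div_of_le (by linarith) (by linarith)
  have h_abs : |eta| ≤ 1 / (d - 1) := abs_le.2 ⟨by linarith, h₂⟩
  calc eta ^ 2 = |eta| ^ 2 := (sq_abs eta).symm
    _ ≤ (1 / (d - 1)) ^ 2 := pow_le_pow_left₀ (abs_nonneg eta) h_abs 2
    _ ≤ 1 / (d + 1) := inv_sub_one_sq_le_inv_add_one hd

section WernerMap

variable {d : ℕ}

theorem trace_werner (hd : d ≠ 0) (eta : ℝ) (X : Matrix (Fin d) (Fin d) ℂ) :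
    (werner d eta X).trace = X.trace := by
  have hdc : (d : ℂ) ≠ 0 := Nat.cast_ne_zero.2 hd
  simp only [werner, trace_add, trace_smul, trace_transpose, trace_one, Fintype.card_fin,
    smul_eq_mul]
  push_cast
  field_simp
  ring

theorem transpose_werner (eta : ℝ) (X : Matrix (Fin d) (Fin d) ℂ) :
    (werner d eta X)ᵀ = (-(eta : ℂ)) • X + (((1 + eta : ℝ) : ℂ) / d) • X.trace • 1 := by
  simp only [werner, transpose_add, transpose_smul, transpose_transpose, transpose_one]

theorem werner_werner (hd : d ≠ 0) (eta₁ eta₂ : ℝ) (X : Matrix (Fin d) (Fin d) ℂ) :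
    werner d eta₁ (werner d eta₂ X) = depol d (eta₁ * eta₂) X := by
  rw [werner, transpose_werner, trace_werner hd, depol]
  push_cast
  module

end WernerMap

/-- For `d ≥ 3` and `-1/(d+1) ≤ η ≤ 1/(d-1)` one has `η² ≤ 1/(d+1)`; moreover
`V_η² = Δ_{η²}`, so the square of any Werner channel in dimension `d ≥ 3` is the
depolarizing channel with parameter `η² ≤ 1/(d+1)`, hence entanglement-breaking. -/
theorem werner_sq_param_le (d : ℕ) (hd : 3 ≤ d) (eta : ℝ)
    (h₁ : -(1 / ((d : ℝ) + 1)) ≤ eta) (h₂ : eta ≤ 1 / ((d : ℝ) - 1)) :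
    eta ^ 2 ≤ 1 / ((d : ℝ) + 1) ∧
    ∀ X : Matrix (Fin d) (Fin d) ℂ, werner d eta (werner d eta X) = depol d (eta ^ 2) X :=
  ⟨sq_le_inv_add_one_of_mem_Icc (by exact_mod_cast hd) h₁ h₂, fun X => by
    rw [werner_werner (by omega), sq]⟩
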